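/- arXiv:2311.13521 — 6 statements merged into one kernel-verified Lean document; each statement's English description precedes it below -/
import Mathlib

section
/- For every integer n ≥ 1, ∑_{i=0}^{n} min(i, n-i) · C(n, i) = n · 2^{n-1} - n · C(n-1, ⌊(n-1)/2⌋). -/
open Finset

lemma aux_mul_choose_left (n m : ℕ) (h1 : 1 ≤ m) :
    m * n.choose m = n * (n - 1).choose (m - 1) := by
  rcases n with _ | n'
  · simp [Nat.choose_eq_zero_of_lt (show 0 < m from h1)]
  rcases m with _ | m'
  · omega
  have := Nat.add_one_mul_choose_eq n' m'
  simpa [Nat.mul_comm] using this.symm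

lemma aux_mul_choose_right (n m : ℕ) (h : m ≤ n) :
    (n - m) * n.choose m = n * (n - 1).choose m := by
  rcases Nat.eq_or_lt_of_le h with heq | hlt
  · subst heq
    rcases m with _ | m'
    · simp
    · simp [Nat.choose_eq_zero_of_lt (show m' + 1 - 1 < m' + 1 from by omega)]
  · have h1 : 1 ≤ n - m := by omega
    have hsym : n.choose m = n.choose (n - m) := (Nat.choose_symm h).symm
    rw [hsym, aux_mul_choose_left n (n - m) h1]
    congr 1
    rw [show n - m - 1 = (n - 1) - m from by omega,
      Nat.choose_symm (by omega : m ≤ n - 1)]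

lemma aux_sum_i_choose (n : ℕ) (hn : 1 ≤ n) :
    ∑ i ∈ range (n + 1), i * n.choose i = n * 2 ^ (n - 1) := by
  rw [Finset.sum_range_succ']
  simp only [Nat.zero_mul, Nat.add_zero]
  have : ∀ i, (i + 1) * n.choose (i + 1) = n * (n - 1).choose i := by
    intro i
    rw [aux_mul_choose_left n (i + 1) (by omega)]
    simp
  rw [Finset.sum_congr rfl (fun i _ => this i), ← Finset.mul_sum]
  congr 1
  have := Nat.sum_range_choose (n - 1)
  rwa [show n - 1 + 1 = n from by omega] at this

lemma aux_telescope (n : ℕ) (hn : 1 ≤ n) :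
    ∀ m, n / 2 < m → m ≤ n + 1 →
      (∑ i ∈ range m, (i - (n - i)) * n.choose i) + n * (n - 1).choose (m - 1)
        = n * (n - 1).choose (n / 2) := by
  intro m
  induction m with
  | zero => omega
  | succ m ih =>
    intro hlo hhi
    rcases Nat.lt_or_ge (n / 2) m with hm | hm
    · -- inductive case: m > n/2
      rw [Finset.sum_range_succ]
      have hmn : m ≤ n := by omega
      have h2m : n - m ≤ m := by omega
      have hterm : (m - (n - m)) * n.choose m + n * (n - 1).choose m
          = n * (n - 1).choose (m - 1) := by
        rw [Nat.sub_mul, ← aux_mul_choose_right n m hmn,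
          ← aux_mul_choose_left n m (by omega)]
        have hle : (n - m) * n.choose m ≤ m * n.choose m :=
          Nat.mul_le_mul_right _ h2m
        omega
      have := ih hm (by omega)
      simp only [Nat.add_sub_cancel]
      omega
    · -- base case: m = n / 2
      have hm' : m = n / 2 := by omega
      subst hm'
      have hz : ∑ i ∈ range (n / 2 + 1), (i - (n - i)) * n.choose i = 0 := by
        apply Finset.sum_eq_zero
        intro i hi
        simp only [Finset.mem_range] at hi
        have : i - (n - i) = 0 := by omega
        simp [this]
      rw [hz]
      simp

theorem stmt_4 (n : ℕ) (hn : 1 ≤ n) :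
    ∑ i ∈ Finset.range (n + 1), min i (n - i) * Nat.choose n i =
      n * 2 ^ (n - 1) - n * Nat.choose (n - 1) ((n - 1) / 2) := by
  have hT := aux_telescope n hn (n + 1) (by omega) le_rfl
  rw [Nat.add_sub_cancel, Nat.choose_eq_zero_of_lt (by omega : n - 1 < n),
    Nat.mul_zero, Nat.add_zero] at hT
  have hmid : (n - 1).choose (n / 2) = (n - 1).choose ((n - 1) / 2) := by
    rcases Nat.even_or_odd n with ⟨k, hk⟩ | ⟨k, hk⟩
    · subst hk
      rw [show (k + k) / 2 = k from by omega]
      rw [← Nat.choose_symm (show k ≤ k + k - 1 from by omega)]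
      congr 1
      omega
    · subst hk
      congr 1
      omega
  have hsplit : (∑ i ∈ Finset.range (n + 1), min i (n - i) * Nat.choose n i)
      + (∑ i ∈ Finset.range (n + 1), (i - (n - i)) * n.choose i)
      = ∑ i ∈ range (n + 1), i * n.choose i := by
    rw [← Finset.sum_add_distrib]
    apply Finset.sum_congr rfl
    intro i _
    rw [← Nat.add_mul]
    congr 1
    omega
  have hsum := aux_sum_i_choose n hn
  rw [hT, hmid] at hsplit
  omega
end

section
/- Let k ≥ 1 and let ε ∈ {0,1}^k be a fixed vector with exactly n entries equal to 1 (0 ≤ n ≤ k). Then the sum of min(|ε⁰|, |ε^∞|) over all pairs (ε⁰, ε^∞) ∈ ({0,1}^k)² such that ε⁰_i + ε^∞_i ≡ ε_i (mod 2) for all i equals k·2^{k-1} - n·2^{k-n}·C(n-1, ⌊(n-1)/2⌋) when n ≥ 1, and equals k·2^{k-1} when n = 0, where |ε⁰| denotes the number of entries of ε⁰ equal to 1. -/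
open Finset

lemma mul_choose_left (n s : ℕ) (hs : 1 ≤ s) :
    s * n.choose s = n * (n - 1).choose (s - 1) := by
  cases n with
  | zero =>
    rw [Nat.choose_eq_zero_of_lt (by omega)]
    simp
  | succ m =>
    obtain ⟨t, rfl⟩ : ∃ t, s = t + 1 := ⟨s - 1, by omega⟩
    have := Nat.add_one_mul_choose_eq m t
    simp only [Nat.add_sub_cancel]
    rw [this, Nat.mul_comm]

lemma mul_choose_right (n s : ℕ) :
    (n - s) * n.choose s = n * (n - 1).choose s := by
  rcases lt_or_ge s n with h | h
  · have h1 : 1 ≤ n - s := by omega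
    have := mul_choose_left n (n - s) h1
    rw [Nat.choose_symm (by omega)] at this
    have h2 : n - s - 1 = (n - 1) - s := by omega
    rw [h2, Nat.choose_symm (by omega)] at this
    exact this
  · rcases eq_or_lt_of_le h with rfl | h'
    · rcases Nat.eq_zero_or_pos n with rfl | hn
      · simp
      · rw [Nat.choose_eq_zero_of_lt (show n - 1 < n by omega)]
        simp
    · rw [Nat.choose_eq_zero_of_lt h', Nat.choose_eq_zero_of_lt (by omega)]
      simp

lemma anti_le (G : ℕ → ℕ) :
    ∀ b a, a ≤ b → (∀ s, a ≤ s → s < b → G (s + 1) ≤ G s) → G b ≤ G a := by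
  intro b
  induction b with
  | zero =>
    intro a ha _
    have : a = 0 := by omega
    simp [this]
  | succ m ih =>
    intro a ha h
    rcases Nat.eq_or_lt_of_le ha with rfl | ha'
    · exact le_refl _
    · have h1 := ih a (by omega) (fun s h1 h2 => h s h1 (by omega))
      have h2 := h m (by omega) (by omega)
      omega

lemma tele (G : ℕ → ℕ) :
    ∀ b a, a ≤ b → (∀ s, a ≤ s → s < b → G (s + 1) ≤ G s) →
      ∑ s ∈ Ico a b, (G s - G (s + 1)) = G a - G b := by
  intro b
  induction b with
  | zero =>
    intro a ha _
    have : a = 0 := by omega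
    subst this
    simp
  | succ m ih =>
    intro a ha h
    rcases Nat.eq_or_lt_of_le ha with rfl | ha'
    · simp
    · rw [Finset.sum_Ico_succ_top (by omega : a ≤ m)]
      rw [ih a (by omega) (fun s h1 h2 => h s h1 (by omega))]
      have h1 := anti_le G m a (by omega) (fun s h1 h2 => h s h1 (by omega))
      have h2 := h m (by omega) (by omega)
      omega

lemma key_sum (n : ℕ) (hn : 1 ≤ n) :
    ∑ s ∈ range (n + 1), n.choose s * (s - (n - s)) = n * (n - 1).choose ((n - 1) / 2) := by
  rw [← Nat.Ico_zero_eq_range, ← Finset.sum_Ico_consecutive _ (Nat.zero_le (n/2+1)) (by omega : n/2+1 ≤ n+1)]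
  have first : ∑ s ∈ Ico 0 (n/2+1), n.choose s * (s - (n - s)) = 0 := by
    apply Finset.sum_eq_zero
    intro s hs
    rw [Finset.mem_Ico] at hs
    have h0 : s - (n - s) = 0 := by omega
    simp [h0]
  rw [first, zero_add]
  have congr1 : ∀ s ∈ Ico (n/2+1) (n+1),
      n.choose s * (s - (n - s)) = n * (n-1).choose (s-1) - n * (n-1).choose s := by
    intro s hs
    rw [Finset.mem_Ico] at hs
    have hs1 : 1 ≤ s := by omega
    have e1 := mul_choose_left n s hs1
    have e2 := mul_choose_right n s
    have e3 : n.choose s * (s - (n - s)) + (n - s) * n.choose s = s * n.choose s := by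
      have h4 : (s - (n - s)) + (n - s) = s := by omega
      calc n.choose s * (s - (n - s)) + (n - s) * n.choose s
          = ((s - (n - s)) + (n - s)) * n.choose s := by ring
        _ = s * n.choose s := by rw [h4]
    omega
  rw [Finset.sum_congr rfl congr1]
  have hshift : ∑ s ∈ Ico (n/2+1) (n+1), (n * (n-1).choose (s-1) - n * (n-1).choose s)
      = ∑ s ∈ Ico (n/2) n, ((fun j => n * (n-1).choose j) s - (fun j => n * (n-1).choose j) (s+1)) := by
    rw [Finset.sum_Ico_eq_sum_range, Finset.sum_Ico_eq_sum_range]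
    rw [show n + 1 - (n/2 + 1) = n - n/2 from by omega]
    apply Finset.sum_congr rfl
    intro i _
    rw [show n/2+1+i-1 = n/2 + i from by omega, show n/2+1+i = n/2+i+1 from by omega]
  rw [hshift]
  rw [tele (fun j => n * (n-1).choose j) n (n/2) (by omega) ?_]
  · rw [Nat.choose_eq_zero_of_lt (show n - 1 < n by omega), Nat.mul_zero, Nat.sub_zero]
    rcases Nat.even_or_odd n with ⟨m, rfl⟩ | ho
    · have hm : 1 ≤ m := by omega
      have hsym := Nat.choose_symm (show m - 1 ≤ m + m - 1 by omega)
      rw [show (m + m - 1) - (m - 1) = m from by omega] at hsym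
      rw [show (m+m)/2 = m from by omega, show (m+m-1)/2 = m - 1 from by omega, hsym]
    · obtain ⟨m, rfl⟩ := ho
      rw [show (2*m+1) / 2 = (2*m+1-1)/2 from by omega]
  · intro s h1 h2
    show n * (n-1).choose (s+1) ≤ n * (n-1).choose s
    have e1 := mul_choose_left n (s+1) (by omega)
    have e2 := mul_choose_right n (s+1)
    simp only [Nat.add_sub_cancel] at e1
    have hle : (n - (s+1)) * n.choose (s+1) ≤ (s+1) * n.choose (s+1) :=
      Nat.mul_le_mul_right _ (by omega)
    omega

lemma sum_mul_choose (n : ℕ) :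
    ∑ s ∈ range (n + 1), n.choose s * s = n * 2 ^ (n - 1) := by
  cases n with
  | zero => simp
  | succ m =>
    rw [Finset.sum_range_succ']
    simp only [Nat.choose_zero_right, Nat.mul_zero, Nat.add_zero]
    have : ∀ i, (m+1).choose (i+1) * (i+1) = (m+1) * m.choose i := by
      intro i
      have := Nat.add_one_mul_choose_eq m i
      omega
    rw [Finset.sum_congr rfl (fun i _ => this i), ← Finset.mul_sum, Nat.sum_range_choose]
    simp

lemma A_plus (n : ℕ) :
    ∑ s ∈ range (n + 1), n.choose s * min s (n - s) + n * (n-1).choose ((n-1)/2)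
      = n * 2 ^ (n - 1) := by
  rcases Nat.eq_zero_or_pos n with rfl | hn
  · simp
  · have hks := key_sum n hn
    have e : ∀ s ∈ range (n+1),
        n.choose s * s = n.choose s * min s (n - s) + n.choose s * (s - (n - s)) := by
      intro s _
      rw [← Nat.mul_add]
      congr 1
      omega
    have := sum_mul_choose n
    rw [Finset.sum_congr rfl e, Finset.sum_add_distrib, hks] at this
    omega

lemma sum_card_powerset {α : Type*} [DecidableEq α] (P : Finset α) :
    ∑ B ∈ P.powerset, B.card = P.card * 2 ^ (P.card - 1) := by
  rw [Finset.sum_powerset]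
  have e : ∀ j ∈ range (P.card + 1),
      ∑ B ∈ Finset.powersetCard j P, B.card = P.card.choose j * j := by
    intro j _
    rw [Finset.sum_congr rfl (fun B hB => (Finset.mem_powersetCard.mp hB).2),
      Finset.sum_const, Finset.card_powersetCard, smul_eq_mul]
  rw [Finset.sum_congr rfl e, sum_mul_choose]

/-- The number of `true` entries of a 0-1 vector. -/
def wt {k : ℕ} (v : Fin k → Bool) : ℕ := (Finset.univ.filter fun i => v i = true).card

lemma final_arith (k n : ℕ) (hnk : n ≤ k) (M C : ℕ)
    (hA : M + n * C = n * 2 ^ (n - 1)) :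
    2^(k-n) * M + 2^n * ((k-n) * 2^(k-n-1)) = k * 2^(k-1) - n * 2^(k-n) * C := by
  have f2 : 2^(k-n) * (n * 2^(n-1)) = n * 2^(k-1) := by
    rcases Nat.eq_zero_or_pos n with rfl | hn
    · simp
    · calc 2^(k-n) * (n * 2^(n-1)) = n * (2^(k-n) * 2^(n-1)) := by ring
        _ = n * 2^((k-n)+(n-1)) := by rw [pow_add]
        _ = n * 2^(k-1) := by rw [show (k-n)+(n-1) = k-1 from by omega]
  have f3 : 2^n * ((k-n) * 2^(k-n-1)) = (k-n) * 2^(k-1) := by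
    rcases eq_or_lt_of_le hnk with rfl | hlt
    · simp
    · calc 2^n * ((k-n) * 2^(k-n-1)) = (k-n) * (2^n * 2^(k-n-1)) := by ring
        _ = (k-n) * 2^(n+(k-n-1)) := by rw [pow_add]
        _ = (k-n) * 2^(k-1) := by rw [show n+(k-n-1) = k-1 from by omega]
  apply Nat.eq_sub_of_add_eq
  calc 2^(k-n) * M + 2^n * ((k-n) * 2^(k-n-1)) + n * 2^(k-n) * C
      = 2^(k-n) * (M + n * C) + 2^n * ((k-n) * 2^(k-n-1)) := by ring
    _ = 2^(k-n) * (n * 2^(n-1)) + 2^n * ((k-n) * 2^(k-n-1)) := by rw [hA]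
    _ = n * 2^(k-1) + (k-n) * 2^(k-1) := by rw [f2, f3]
    _ = (n + (k-n)) * 2^(k-1) := by rw [Nat.add_mul]
    _ = k * 2^(k-1) := by rw [show n + (k-n) = k from by omega]

theorem stmt_5 (k : ℕ) (hk : 1 ≤ k) (ε : Fin k → Bool) (n : ℕ)
    (hn : wt ε = n) (hnk : n ≤ k) :
    ∑ p ∈ Finset.univ.filter
        (fun p : (Fin k → Bool) × (Fin k → Bool) => ∀ i, xor (p.1 i) (p.2 i) = ε i),
      min (wt p.1) (wt p.2) =
    k * 2 ^ (k - 1) - n * 2 ^ (k - n) * Nat.choose (n - 1) ((n - 1) / 2) := by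
  classical
  set S : Finset (Fin k) := Finset.univ.filter (fun i => ε i = true) with hSdef
  set T : Finset (Fin k) := Finset.univ.filter (fun i => ¬ ε i = true) with hTdef
  have memS : ∀ x, x ∈ S ↔ ε x = true := by intro x; rw [hSdef]; simp
  have memT : ∀ x, x ∈ T ↔ ¬ ε x = true := by intro x; rw [hTdef]; simp
  have hS : S.card = n := hn
  have hST : S.card + T.card = k := by
    have := Finset.card_filter_add_card_filter_not
      (s := (Finset.univ : Finset (Fin k))) (p := fun i => ε i = true)
    simpa [hSdef, hTdef] using this
  have hT : T.card = k - n := by omega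
  have hUnion : (Finset.univ : Finset (Fin k)) = S ∪ T := by
    rw [hSdef, hTdef, Finset.filter_union_filter_not_eq]
  have hDisj : Disjoint S T := by
    rw [hSdef, hTdef]; exact Finset.disjoint_filter_filter_not _ _ _
  -- value computation
  have hval : ∀ a : Fin k → Bool,
      min (wt a) (wt (fun i => xor (a i) (ε i)))
      = min (S.filter fun x => a x = true).card (n - (S.filter fun x => a x = true).card)
        + (T.filter fun x => a x = true).card := by
    intro a
    have h1 : wt a = (S.filter fun x => a x = true).card + (T.filter fun x => a x = true).card := by
      show (Finset.univ.filter fun i => a i = true).card = _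
      rw [hUnion, Finset.filter_union,
        Finset.card_union_of_disjoint (Finset.disjoint_filter_filter hDisj)]
    have h2 : wt (fun i => xor (a i) (ε i))
        = (n - (S.filter fun x => a x = true).card) + (T.filter fun x => a x = true).card := by
      show (Finset.univ.filter fun i => xor (a i) (ε i) = true).card = _
      rw [hUnion, Finset.filter_union,
        Finset.card_union_of_disjoint (Finset.disjoint_filter_filter hDisj)]
      have e1 : S.filter (fun x => xor (a x) (ε x) = true) = S.filter (fun x => ¬ a x = true) := by
        apply Finset.filter_congr
        intro x hx
        have hε : ε x = true := (memS x).mp hx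
        rw [hε]
        cases a x <;> simp
      have e2 : T.filter (fun x => xor (a x) (ε x) = true) = T.filter (fun x => a x = true) := by
        apply Finset.filter_congr
        intro x hx
        have hε : ε x = false := by
          have := (memT x).mp hx
          simp at this
          exact this
        rw [hε]
        cases a x <;> simp
      have e3 : (S.filter (fun x => ¬ a x = true)).card
          = n - (S.filter fun x => a x = true).card := by
        have := Finset.card_filter_add_card_filter_not
          (s := S) (p := fun x => a x = true)
        omega
      rw [e1, e2, e3]
    have hle : (S.filter fun x => a x = true).card ≤ n := by
      rw [← hS]; exact Finset.card_le_card (Finset.filter_subset _ _)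
    rw [h1, h2]
    omega
  -- step 1 : pairs to single function
  have step1 : ∑ p ∈ Finset.univ.filter
        (fun p : (Fin k → Bool) × (Fin k → Bool) => ∀ i, xor (p.1 i) (p.2 i) = ε i),
      min (wt p.1) (wt p.2)
      = ∑ a : Fin k → Bool, min (wt a) (wt (fun i => xor (a i) (ε i))) := by
    apply Finset.sum_nbij' (i := fun p => p.1)
      (j := fun a => (a, fun i => xor (a i) (ε i)))
    · intro p _; exact Finset.mem_univ _
    · intro a _
      simp only [Finset.mem_filter, Finset.mem_univ, true_and]
      intro i
      cases a i <;> cases ε i <;> rfl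
    · intro p hp
      simp only [Finset.mem_filter, Finset.mem_univ, true_and] at hp
      have h2 : (fun i => xor (p.1 i) (ε i)) = p.2 := by
        funext i
        show xor (p.1 i) (ε i) = p.2 i
        have h := hp i
        revert h
        cases p.1 i <;> cases p.2 i <;> cases ε i <;> decide
      rw [h2]
    · intro a _; rfl
    · intro p hp
      simp only [Finset.mem_filter, Finset.mem_univ, true_and] at hp
      have h2 : (fun i => xor (p.1 i) (ε i)) = p.2 := by
        funext i
        show xor (p.1 i) (ε i) = p.2 i
        have h := hp i
        revert h
        cases p.1 i <;> cases p.2 i <;> cases ε i <;> decide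
      rw [h2]
  -- step 2 : functions to pairs of subsets
  have step2 : ∑ a : Fin k → Bool, min (wt a) (wt (fun i => xor (a i) (ε i)))
      = ∑ q ∈ S.powerset ×ˢ T.powerset, (min q.1.card (n - q.1.card) + q.2.card) := by
    apply Finset.sum_nbij'
      (i := fun a => (S.filter fun x => a x = true, T.filter fun x => a x = true))
      (j := fun q => fun x => decide (x ∈ q.1 ∨ x ∈ q.2))
    · intro a _
      simp only [Finset.mem_product, Finset.mem_powerset]
      exact ⟨Finset.filter_subset _ _, Finset.filter_subset _ _⟩
    · intro q _; exact Finset.mem_univ _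
    · intro a _
      funext x
      rcases Bool.dichotomy (a x) with h | h <;> rcases Bool.dichotomy (ε x) with h2 | h2 <;>
        simp [Finset.mem_filter, memS, memT, h, h2]
    · intro q hq
      simp only [Finset.mem_product, Finset.mem_powerset] at hq
      obtain ⟨hq1, hq2⟩ := hq
      have c1 : S.filter (fun x => decide (x ∈ q.1 ∨ x ∈ q.2) = true) = q.1 := by
        ext x
        simp only [Finset.mem_filter, decide_eq_true_eq]
        constructor
        · rintro ⟨hxS, hx | hx⟩
          · exact hx
          · exact absurd ((memS x).mp hxS) ((memT x).mp (hq2 hx))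
        · intro hx
          exact ⟨hq1 hx, Or.inl hx⟩
      have c2 : T.filter (fun x => decide (x ∈ q.1 ∨ x ∈ q.2) = true) = q.2 := by
        ext x
        simp only [Finset.mem_filter, decide_eq_true_eq]
        constructor
        · rintro ⟨hxT, hx | hx⟩
          · exact absurd ((memS x).mp (hq1 hx)) ((memT x).mp hxT)
          · exact hx
        · intro hx
          exact ⟨hq2 hx, Or.inr hx⟩
      rw [Prod.ext_iff]
      exact ⟨c1, c2⟩
    · intro a _
      exact hval a
  rw [step1, step2, Finset.sum_product]
  have inner : ∀ A : Finset (Fin k),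
      ∑ B ∈ T.powerset, (min A.card (n - A.card) + B.card)
      = 2^(k-n) * min A.card (n - A.card) + (k-n) * 2^(k-n-1) := by
    intro A
    rw [Finset.sum_add_distrib, Finset.sum_const, sum_card_powerset, Finset.card_powerset, hT,
      smul_eq_mul, Nat.mul_comm]
  rw [Finset.sum_congr rfl (fun A _ => inner A), Finset.sum_add_distrib, Finset.sum_const,
    Finset.card_powerset, hS, ← Finset.mul_sum, smul_eq_mul]
  have hpow : ∑ A ∈ S.powerset, min A.card (n - A.card)
      = ∑ j ∈ Finset.range (n+1), n.choose j * min j (n - j) := by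
    rw [Finset.sum_powerset, hS]
    apply Finset.sum_congr rfl
    intro j _
    rw [Finset.sum_congr rfl (fun A hA => by rw [(Finset.mem_powersetCard.mp hA).2]),
      Finset.sum_const, Finset.card_powersetCard, hS, smul_eq_mul]
  rw [hpow]
  exact final_arith k n hnk _ _ (A_plus n)
end

section
/- Let k ≥ 1 and d_1, …, d_k be positive integers. Then ∑_{ε⁰, ε^∞ ∈ {0,1}^k} min(|ε⁰|, |ε^∞|) · ∏_{i=1}^k C(2d_i - 2, d_i - ε⁰_i - ε^∞_i) = k·2^{k-1}·∏_{i=1}^k C(2d_i - 1, d_i) - ∑_{ε ∈ {0,1}^k} |ε|·2^{k-|ε|}·C(|ε|-1, ⌊(|ε|-1)/2⌋)·∏_{i=1}^k C(2d_i - 2, d_i - ε_i), where binomial coefficients C(a, b) with b < 0 or b > a are interpreted as 0, and the term for ε = 0 on the right is 0. -/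
/-- Binomial coefficient `C(a, b)` with an integer lower argument, equal to `0`
when `b < 0` (and, via `Nat.choose`, also when `b > a`). -/
def chooseZ (a : ℕ) (b : ℤ) : ℕ := if 0 ≤ b then a.choose b.toNat else 0

open Finset symmDiff


lemma tel (m : ℕ) : ∀ t : ℕ, 2*t ≤ m →
    ∑ s ∈ range (t+1), (m - 2*s) * Nat.choose m s = m * Nat.choose (m-1) t := by
  intro t
  induction t with
  | zero => simp
  | succ t ih =>
    intro h
    have ht : 2*t ≤ m := by omega
    have hm : 1 ≤ m := by omega
    rw [Finset.sum_range_succ, ih ht]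
    have pascal : Nat.choose m (t+1) = Nat.choose (m-1) t + Nat.choose (m-1) (t+1) := by
      conv_lhs => rw [show m = (m-1) + 1 from by omega]
      rw [Nat.choose_succ_succ]
    have key : Nat.choose (m-1) (t+1) * (t+1) = Nat.choose (m-1) t * (m - 1 - t) :=
      Nat.choose_succ_right_eq (m-1) t
    set a := Nat.choose (m-1) t
    set b := Nat.choose (m-1) (t+1)
    rw [pascal]
    zify [hm, show 2*(t+1) ≤ m from h, show t ≤ m - 1 from by omega] at key ⊢
    push_cast at key ⊢
    nlinarith [key]


lemma absSum (m : ℕ) :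
    ∑ s ∈ range (m+1), ((m - 2*s) + (2*s - m)) * Nat.choose m s
      = 2 * (m * Nat.choose (m-1) ((m-1)/2)) := by
  have hsplit : ∀ s ∈ range (m+1), ((m - 2*s) + (2*s - m)) * Nat.choose m s
      = (m - 2*s) * Nat.choose m s + (m - 2*(m-s)) * Nat.choose m (m-s) := by
    intro s hs
    rw [mem_range] at hs
    rw [Nat.choose_symm (by omega : s ≤ m)]
    have : m - 2*(m-s) = 2*s - m := by omega
    rw [this, Nat.add_mul]
  rw [Finset.sum_congr rfl hsplit, Finset.sum_add_distrib]
  have hrefl : ∑ s ∈ range (m+1), (m - 2*(m-s)) * Nat.choose m (m-s)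
      = ∑ s ∈ range (m+1), (m - 2*s) * Nat.choose m s := by
    have := Finset.sum_range_reflect (fun s => (m - 2*s) * Nat.choose m s) (m+1)
    simpa using this
  rw [hrefl, ← two_mul]
  congr 1
  set t := (m-1)/2 with htdef
  have h1 : range (t+1) ⊆ range (m+1) := by
    apply Finset.range_subset_range.2; omega
  rw [← Finset.sum_subset h1 (by
    intro s _ hs
    rw [mem_range, not_lt] at hs
    have : m - 2*s = 0 := by omega
    simp [this])]
  exact tel m t (by omega)


variable {k : ℕ}

lemma fiberCard (E A : Finset (Fin k)) (hA : A ⊆ E) :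
    (univ.filter fun B : Finset (Fin k) => B ∩ E = A).card = 2 ^ (k - E.card) := by
  have h1 : (Eᶜ.powerset).card = 2 ^ (k - E.card) := by
    rw [Finset.card_powerset, Finset.card_compl, Fintype.card_fin]
  rw [← h1]
  apply Finset.card_bij' (fun B _ => B \ E) (fun C _ => A ∪ C)
  · intro B hB
    rw [Finset.mem_filter] at hB
    rw [Finset.mem_powerset]
    intro i hi
    simp only [Finset.mem_sdiff] at hi
    simp [hi.2]
  · intro C hC
    rw [Finset.mem_powerset] at hC
    rw [Finset.mem_filter]
    refine ⟨Finset.mem_univ _, ?_⟩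
    ext i
    simp only [Finset.mem_inter, Finset.mem_union]
    constructor
    · rintro ⟨h1 | h1, h2⟩
      · exact h1
      · exact absurd h2 (by simpa using hC h1)
    · intro h; exact ⟨Or.inl h, hA h⟩
  · intro B hB
    rw [Finset.mem_filter] at hB
    rw [← hB.2]
    ext i
    simp only [Finset.mem_union, Finset.mem_inter, Finset.mem_sdiff]
    tauto
  · intro C hC
    rw [Finset.mem_powerset] at hC
    ext i
    simp only [Finset.mem_union, Finset.mem_sdiff]
    constructor
    · rintro ⟨h1 | h1, h2⟩
      · exact absurd (hA h1) h2
      · exact h1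
    · intro h
      exact ⟨Or.inr h, by simpa using hC h⟩

lemma groupW (E : Finset (Fin k)) (G : ℕ → ℕ) :
    ∑ B : Finset (Fin k), G ((B ∩ E).card)
      = 2 ^ (k - E.card) * ∑ s ∈ range (E.card + 1), Nat.choose E.card s * G s := by
  rw [← Finset.sum_fiberwise_of_maps_to
    (g := fun B : Finset (Fin k) => B ∩ E) (t := E.powerset)
    (fun B _ => Finset.mem_powerset.2 Finset.inter_subset_right)
    (fun B => G ((B ∩ E).card))]
  have step : ∀ A ∈ E.powerset,
      (∑ B ∈ univ.filter fun B : Finset (Fin k) => B ∩ E = A, G ((B ∩ E).card))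
        = 2 ^ (k - E.card) * G A.card := by
    intro A hA
    have h2 : ∀ B ∈ univ.filter fun B : Finset (Fin k) => B ∩ E = A,
        G ((B ∩ E).card) = G A.card := fun B hB => by
      rw [(Finset.mem_filter.1 hB).2]
    rw [Finset.sum_congr rfl h2, Finset.sum_const,
      fiberCard E A (Finset.mem_powerset.1 hA), smul_eq_mul]
  rw [Finset.sum_congr rfl step, Finset.sum_powerset, Finset.mul_sum]
  apply Finset.sum_congr rfl
  intro j hj
  have h3 : ∀ A ∈ Finset.powersetCard j E,
      2 ^ (k - E.card) * G A.card = 2 ^ (k - E.card) * G j := fun A hA => by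
    rw [(Finset.mem_powersetCard.1 hA).2]
  rw [Finset.sum_congr rfl h3, Finset.sum_const,
    Finset.card_powersetCard, smul_eq_mul]
  ring


variable {k : ℕ}

lemma cardSymmDiff (s t : Finset (Fin k)) : (s ∆ t).card = (s \ t).card + (t \ s).card := by
  rw [symmDiff_def, Finset.sup_eq_union, Finset.card_union_of_disjoint disjoint_sdiff_sdiff]

lemma sumSC (k : ℕ) (hk : 1 ≤ k) :
    ∑ s ∈ range (k+1), Nat.choose k s * s = k * 2^(k-1) := by
  rw [Finset.sum_range_succ']
  simp only [Nat.mul_zero, Nat.add_zero]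
  have h : ∀ s, Nat.choose k (s+1) * (s+1) = k * Nat.choose (k-1) s := by
    intro s
    have := Nat.add_one_mul_choose_eq (k-1) s
    simp only [Nat.succ_eq_add_one, Nat.sub_add_cancel hk] at this
    omega
  rw [Finset.sum_congr rfl (fun s _ => h s), ← Finset.mul_sum]
  congr 1
  have := Nat.sum_range_choose (k-1)
  rwa [Nat.sub_add_cancel hk] at this





variable {k : ℕ}

def toF (b : Fin k → Bool) : Finset (Fin k) := Finset.univ.filter fun i => b i = true

def eqvF : (Fin k → Bool) ≃ Finset (Fin k) where
  toFun := toF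
  invFun B := fun i => decide (i ∈ B)
  left_inv b := by funext i; simp [toF]
  right_inv B := by ext i; simp [toF]

lemma wt_eq (b : Fin k → Bool) : wt b = (toF b).card := rfl

lemma toF_xor (a b : Fin k → Bool) :
    toF (fun i => xor (a i) (b i)) = toF a ∆ toF b := by
  ext i
  simp only [toF, Finset.mem_filter, Finset.mem_univ, true_and, Finset.mem_symmDiff]
  cases a i <;> cases b i <;> simp

lemma cfac (d : ℕ) (hd : 1 ≤ d) (a b : Bool) :
    chooseZ (2*d-2) ((d:ℤ) - (if a then 1 else 0) - (if b then 1 else 0))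
      = Nat.choose (2*d-2) (d - (if xor a b then 1 else 0)) := by
  rcases Nat.lt_or_ge d 2 with h | h
  · have : d = 1 := by omega
    subst this
    cases a <;> cases b <;> simp [chooseZ] <;> decide
  · cases a <;> cases b <;>
      simp only [Bool.xor_false, Bool.xor_true, Bool.false_xor, Bool.true_xor,
        Bool.not_true, Bool.not_false, chooseZ, if_true, if_false, Bool.false_eq_true,
        Bool.true_eq_false, sub_zero, Nat.sub_zero]
    · rw [if_pos (by positivity : (0:ℤ) ≤ (d:ℤ))]
      norm_num
    · rw [if_pos (by omega : (0:ℤ) ≤ (d:ℤ) - 1)]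
      congr 1
      omega
    · rw [if_pos (by omega : (0:ℤ) ≤ (d:ℤ) - 1)]
      congr 1
      omega
    · rw [if_pos (by omega : (0:ℤ) ≤ (d:ℤ) - 1 - 1)]
      have h1 : ((d:ℤ) - 1 - 1).toNat = d - 2 := by omega
      rw [h1]
      rw [show d-2 = 2*d-2-d from by omega]
      exact Nat.choose_symm (by omega : d ≤ 2*d-2)

lemma sumCard (k : ℕ) (hk : 1 ≤ k) :
    ∑ B : Finset (Fin k), B.card = k * 2^(k-1) := by
  have h := groupW (k := k) Finset.univ id
  simp only [Finset.inter_univ, id_eq, Finset.card_univ, Fintype.card_fin] at h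
  rw [h, Nat.sub_self, pow_zero, one_mul]
  exact sumSC k hk

lemma PB (k : ℕ) (hk : 1 ≤ k) (E : Finset (Fin k)) :
    (∑ B : Finset (Fin k), min ((E ∆ B).card) B.card)
      + E.card * 2^(k - E.card) * Nat.choose (E.card - 1) ((E.card - 1)/2)
      = k * 2^(k-1) := by
  set m := E.card with hm
  have point : ∀ B : Finset (Fin k),
      min ((E ∆ B).card) B.card * 2 + ((m - 2*(B ∩ E).card) + (2*(B ∩ E).card - m))
        = (E ∆ B).card + B.card := by
    intro B
    have h1 := Finset.card_inter_add_card_sdiff E B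
    have h2 := Finset.card_inter_add_card_sdiff B E
    have h3 := cardSymmDiff E B
    have h4 : (E ∩ B).card = (B ∩ E).card := by rw [Finset.inter_comm]
    omega
  have sum2 : ∑ B : Finset (Fin k), ((E ∆ B).card + B.card) = 2 * (k * 2^(k-1)) := by
    rw [Finset.sum_add_distrib]
    have hbij : ∑ B : Finset (Fin k), (E ∆ B).card = ∑ B : Finset (Fin k), B.card :=
      Fintype.sum_bijective (fun B => E ∆ B)
        (Function.Involutive.bijective (fun B => symmDiff_symmDiff_cancel_left E B))
        _ _ (fun B => rfl)
    rw [hbij, sumCard k hk]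
    ring
  have sumG : ∑ B : Finset (Fin k), ((m - 2*(B ∩ E).card) + (2*(B ∩ E).card - m))
      = 2^(k-m) * (2 * (m * Nat.choose (m-1) ((m-1)/2))) := by
    have h := groupW (k := k) E (fun s => (m - 2*s) + (2*s - m))
    rw [h, ← hm]
    congr 1
    rw [← absSum m]
    exact Finset.sum_congr rfl (fun s _ => by ring)
  have total := Finset.sum_congr rfl (fun B (_ : B ∈ univ) => point B)
  rw [Finset.sum_add_distrib, ← Finset.sum_mul, sumG, sum2] at total
  have hr : 2^(k-m) * (2 * (m * Nat.choose (m-1) ((m-1)/2)))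
      = 2 * (m * 2^(k-m) * Nat.choose (m-1) ((m-1)/2)) := by ring
  rw [hr] at total
  omega

lemma pascal2 (d : ℕ) (hd : 1 ≤ d) :
    Nat.choose (2*d-2) (d-1) + Nat.choose (2*d-2) d = Nat.choose (2*d-1) d := by
  have h2 : (2*d - 2).choose (d - 1) + (2*d - 2).choose ((d-1) + 1)
      = ((2*d - 2)+1).choose ((d - 1)+1) := (Nat.choose_succ_succ' _ _).symm
  rw [show (d-1)+1 = d from by omega, show (2*d-2)+1 = 2*d-1 from by omega] at h2
  exact h2


theorem stmt_6 (k : ℕ) (hk : 1 ≤ k) (d : Fin k → ℕ) (hd : ∀ i, 1 ≤ d i) :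
    ∑ p : (Fin k → Bool) × (Fin k → Bool),
      min (wt p.1) (wt p.2) *
        ∏ i, chooseZ (2 * d i - 2)
          ((d i : ℤ) - (if p.1 i then 1 else 0) - (if p.2 i then 1 else 0)) =
    k * 2 ^ (k - 1) * ∏ i, Nat.choose (2 * d i - 1) (d i)
      - ∑ ε : Fin k → Bool,
          wt ε * 2 ^ (k - wt ε) * Nat.choose (wt ε - 1) ((wt ε - 1) / 2) *
            ∏ i, Nat.choose (2 * d i - 2) (d i - (if ε i then 1 else 0)) := by
  classical
  set c : Fin k → Bool → ℕ :=
    fun i e => Nat.choose (2 * d i - 2) (d i - (if e then 1 else 0)) with hc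
  set P : (Fin k → Bool) → ℕ := fun ε => ∏ i, c i (ε i) with hP
  -- Step 1: reindex the LHS via (a, b) ↦ (a xor b, b)
  have hinv : Function.Involutive
      (fun p : (Fin k → Bool) × (Fin k → Bool) =>
        ((fun i => xor (p.1 i) (p.2 i)), p.2)) := by
    intro p
    refine Prod.ext (funext fun i => ?_) rfl
    show xor (xor (p.1 i) (p.2 i)) (p.2 i) = p.1 i
    cases p.1 i <;> cases p.2 i <;> rfl
  have step1 : (∑ p : (Fin k → Bool) × (Fin k → Bool),
      min (wt p.1) (wt p.2) *
        ∏ i, chooseZ (2 * d i - 2)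
          ((d i : ℤ) - (if p.1 i then 1 else 0) - (if p.2 i then 1 else 0)))
      = ∑ ε : Fin k → Bool,
          (∑ b : Fin k → Bool, min (wt fun i => xor (ε i) (b i)) (wt b)) * P ε := by
    rw [Fintype.sum_bijective _ hinv.bijective _
      (fun q : (Fin k → Bool) × (Fin k → Bool) =>
        min (wt fun i => xor (q.1 i) (q.2 i)) (wt q.2) * P q.1)
      (fun p => by
        have h1 : (fun i => xor (xor (p.1 i) (p.2 i)) (p.2 i)) = p.1 :=
          funext fun i => by cases p.1 i <;> cases p.2 i <;> rfl
        simp only [h1, hP]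
        congr 1
        exact Finset.prod_congr rfl fun i _ => cfac (d i) (hd i) (p.1 i) (p.2 i))]
    rw [Fintype.sum_prod_type]
    exact Finset.sum_congr rfl fun ε _ => by rw [Finset.sum_mul]
  -- Step 2+3: per-ε identity
  have perE : ∀ ε : Fin k → Bool,
      (∑ b : Fin k → Bool, min (wt fun i => xor (ε i) (b i)) (wt b))
        + wt ε * 2^(k - wt ε) * Nat.choose (wt ε - 1) ((wt ε - 1)/2)
        = k * 2^(k-1) := by
    intro ε
    have hinner : (∑ b : Fin k → Bool, min (wt fun i => xor (ε i) (b i)) (wt b))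
        = ∑ B : Finset (Fin k), min ((toF ε ∆ B).card) B.card :=
      Fintype.sum_equiv eqvF _ _ (fun b => by
        rw [wt_eq (fun i => xor (ε i) (b i)), wt_eq b, toF_xor]; rfl)
    rw [hinner, wt_eq]
    exact PB k hk (toF ε)
  -- Step 4: sum of P ε
  have sumP : ∑ ε : Fin k → Bool, P ε = ∏ i, Nat.choose (2 * d i - 1) (d i) := by
    have hps := Fintype.prod_sum c
    rw [hP, ← hps]
    refine Finset.prod_congr rfl fun i _ => ?_
    rw [Fintype.sum_bool]
    simp only [hc, if_true, if_false, Nat.sub_zero]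
    exact pascal2 (d i) (hd i)
  -- Main equation
  have main : (∑ p : (Fin k → Bool) × (Fin k → Bool),
      min (wt p.1) (wt p.2) *
        ∏ i, chooseZ (2 * d i - 2)
          ((d i : ℤ) - (if p.1 i then 1 else 0) - (if p.2 i then 1 else 0)))
      + (∑ ε : Fin k → Bool,
          wt ε * 2 ^ (k - wt ε) * Nat.choose (wt ε - 1) ((wt ε - 1) / 2) *
            ∏ i, Nat.choose (2 * d i - 2) (d i - (if ε i then 1 else 0)))
      = k * 2 ^ (k - 1) * ∏ i, Nat.choose (2 * d i - 1) (d i) := by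
    rw [step1, ← Finset.sum_add_distrib]
    have hterm : ∀ ε : Fin k → Bool,
        (∑ b : Fin k → Bool, min (wt fun i => xor (ε i) (b i)) (wt b)) * P ε
          + wt ε * 2 ^ (k - wt ε) * Nat.choose (wt ε - 1) ((wt ε - 1) / 2) * P ε
          = (k * 2^(k-1)) * P ε := by
      intro ε
      rw [← Nat.add_mul, perE ε]
    rw [Finset.sum_congr rfl fun ε _ => hterm ε, ← Finset.mul_sum, sumP]
  exact Nat.eq_sub_of_add_eq main
end

section
/- For every integer g ≥ 4, C(2g-2, g-1) > 2·C(2g-4, g-2) + 6·C(2g-6, g-3) - 2^{g-1}. -/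
lemma aux_cb (n : ℕ) (hn : 4 ≤ n) :
    2 * Nat.centralBinom (n+1) + 6 * Nat.centralBinom n ≤ Nat.centralBinom (n+2) := by
  have h1 := Nat.succ_mul_centralBinom_succ n
  have h2 := Nat.succ_mul_centralBinom_succ (n+1)
  have hpos : 0 < (n+1) * (n+2) := by positivity
  refine Nat.le_of_mul_le_mul_left ?_ hpos
  have A : (n + 1) * ((n + 1 + 1) * (n + 1 + 1).centralBinom)
      = 2 * (2 * (n + 1) + 1) * (2 * (2 * n + 1) * n.centralBinom) := by
    rw [h2, ← h1]; ring
  nlinarith [Nat.centralBinom_pos n, Nat.centralBinom_pos (n+1), A, hn,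
    Nat.mul_le_mul_right n.centralBinom hn]

theorem stmt_11 (g : ℕ) (hg : 4 ≤ g) :
    (Nat.choose (2 * g - 2) (g - 1) : ℤ) >
      2 * Nat.choose (2 * g - 4) (g - 2) + 6 * Nat.choose (2 * g - 6) (g - 3)
        - 2 ^ (g - 1) := by
  rcases Nat.lt_or_ge g 7 with h | h
  · interval_cases g <;> norm_num [Nat.choose]
  · obtain ⟨m, rfl⟩ : ∃ m, g = (m + 4) + 3 := ⟨g - 7, by omega⟩
    have e1 : 2 * ((m+4)+3) - 2 = 2 * ((m+4)+2) := by omega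
    have e2 : ((m+4)+3) - 1 = (m+4)+2 := by omega
    have e3 : 2 * ((m+4)+3) - 4 = 2 * ((m+4)+1) := by omega
    have e4 : ((m+4)+3) - 2 = (m+4)+1 := by omega
    have e5 : 2 * ((m+4)+3) - 6 = 2 * (m+4) := by omega
    have e6 : ((m+4)+3) - 3 = (m+4) := by omega
    rw [e1, e2, e3, e4, e5, e6]
    have key := aux_cb (m+4) (by omega)
    simp only [Nat.centralBinom] at key
    have hcast : (2 * Nat.choose (2*((m+4)+1)) ((m+4)+1)
        + 6 * Nat.choose (2*(m+4)) (m+4) : ℤ)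
        ≤ Nat.choose (2*((m+4)+2)) ((m+4)+2) := by exact_mod_cast key
    have hpow : (0:ℤ) < 2 ^ ((m+4)+2) := by positivity
    linarith
end

section
/- Fix an integer g ≥ 4 and define f(t) = C(2t-2, t-1)·C(2g-2t, g-t) + C(2t, t)·C(2g-2t-2, g-t-1) for integers t ≥ 1. Then for all integers t with 1 ≤ t and t + 1 ≤ g/2, we have f(t) > f(t+1). -/
lemma key_cb (u v : ℕ) (h : u < v) :
    Nat.centralBinom (u + 2) * Nat.centralBinom v
      < Nat.centralBinom u * Nat.centralBinom (v + 2) := by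
  have hu1 := Nat.succ_mul_centralBinom_succ u
  have hu2 := Nat.succ_mul_centralBinom_succ (u + 1)
  have hv1 := Nat.succ_mul_centralBinom_succ v
  have hv2 := Nat.succ_mul_centralBinom_succ (v + 1)
  set a := Nat.centralBinom u with ha
  set b := Nat.centralBinom (u + 1) with hb
  set d := Nat.centralBinom (u + 2) with hd
  set e := Nat.centralBinom v with he
  set f := Nat.centralBinom (v + 1) with hf
  set g2 := Nat.centralBinom (v + 2) with hg2
  zify
  have h1 : ((u : ℤ) + 1) * b = 2 * (2 * u + 1) * a := by exact_mod_cast hu1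
  have h2 : ((u : ℤ) + 2) * d = 2 * (2 * (u + 1) + 1) * b := by exact_mod_cast hu2
  have h3 : ((v : ℤ) + 1) * f = 2 * (2 * v + 1) * e := by exact_mod_cast hv1
  have h4 : ((v : ℤ) + 2) * g2 = 2 * (2 * (v + 1) + 1) * f := by exact_mod_cast hv2
  have E1 : ((u : ℤ) + 1) * ((u : ℤ) + 2) * d = 4 * (2 * u + 1) * (2 * u + 3) * a := by
    linear_combination ((u : ℤ) + 1) * h2 + 2 * (2 * (u : ℤ) + 3) * h1
  have E2 : ((v : ℤ) + 1) * ((v : ℤ) + 2) * g2 = 4 * (2 * v + 1) * (2 * v + 3) * e := by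
    linear_combination ((v : ℤ) + 1) * h4 + 2 * (2 * (v : ℤ) + 3) * h3
  have hapos : (0 : ℤ) < a := by exact_mod_cast Nat.centralBinom_pos u
  have hepos : (0 : ℤ) < e := by exact_mod_cast Nat.centralBinom_pos v
  have hP : (0 : ℤ) < ((u : ℤ) + 1) * ((u : ℤ) + 2) * (((v : ℤ) + 1) * ((v : ℤ) + 2)) := by
    positivity
  have hcoef : 4 * (2 * (u : ℤ) + 1) * (2 * u + 3) * (((v : ℤ) + 1) * ((v : ℤ) + 2))
      < 4 * (2 * (v : ℤ) + 1) * (2 * v + 3) * (((u : ℤ) + 1) * ((u : ℤ) + 2)) := by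
    have huv : (u : ℤ) < (v : ℤ) := by exact_mod_cast h
    nlinarith [sq_nonneg ((u : ℤ) + v), sq_nonneg ((u : ℤ) - v), mul_pos (by linarith : (0:ℤ) < (v:ℤ) - u) (by positivity : (0:ℤ) < (u:ℤ) + v + 2)]
  have hmain : ((u : ℤ) + 1) * ((u : ℤ) + 2) * (((v : ℤ) + 1) * ((v : ℤ) + 2)) * (d * e)
      < ((u : ℤ) + 1) * ((u : ℤ) + 2) * (((v : ℤ) + 1) * ((v : ℤ) + 2)) * (a * g2) := by
    have L : ((u : ℤ) + 1) * ((u : ℤ) + 2) * (((v : ℤ) + 1) * ((v : ℤ) + 2)) * (d * e)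
        = (4 * (2 * u + 1) * (2 * u + 3) * (((v : ℤ) + 1) * ((v : ℤ) + 2))) * (a * e) := by
      linear_combination (((v : ℤ) + 1) * ((v : ℤ) + 2) * e) * E1
    have R : ((u : ℤ) + 1) * ((u : ℤ) + 2) * (((v : ℤ) + 1) * ((v : ℤ) + 2)) * (a * g2)
        = (4 * (2 * v + 1) * (2 * v + 3) * (((u : ℤ) + 1) * ((u : ℤ) + 2))) * (a * e) := by
      linear_combination (((u : ℤ) + 1) * ((u : ℤ) + 2) * a) * E2
    rw [L, R]
    exact mul_lt_mul_of_pos_right hcoef (mul_pos hapos hepos)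
  exact lt_of_mul_lt_mul_left hmain (le_of_lt hP)

theorem stmt_12 (g : ℕ) (hg : 4 ≤ g) (t : ℕ) (ht : 1 ≤ t) (ht' : 2 * (t + 1) ≤ g) :
    Nat.choose (2 * t - 2) (t - 1) * Nat.choose (2 * g - 2 * t) (g - t)
      + Nat.choose (2 * t) t * Nat.choose (2 * g - 2 * t - 2) (g - t - 1) >
    Nat.choose (2 * (t + 1) - 2) ((t + 1) - 1) * Nat.choose (2 * g - 2 * (t + 1)) (g - (t + 1))
      + Nat.choose (2 * (t + 1)) (t + 1) *
          Nat.choose (2 * g - 2 * (t + 1) - 2) (g - (t + 1) - 1) := by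
  obtain ⟨u, rfl⟩ : ∃ u, t = u + 1 := ⟨t - 1, by omega⟩
  obtain ⟨v, rfl⟩ : ∃ v, g = u + v + 4 := ⟨g - u - 4, by omega⟩
  have huv : u < v + 1 := by omega
  have hkey := key_cb u (v + 1) huv
  simp only [Nat.centralBinom] at hkey
  rw [show 2 * (u + 1) - 2 = 2 * u from by omega,
      show (u + 1) - 1 = u from by omega,
      show 2 * (u + v + 4) - 2 * (u + 1) = 2 * (v + 3) from by omega,
      show (u + v + 4) - (u + 1) = v + 3 from by omega,
      show 2 * (v + 3) - 2 = 2 * (v + 2) from by omega,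
      show (v + 3) - 1 = v + 2 from by omega,
      show 2 * (u + 1 + 1) - 2 = 2 * (u + 1) from by omega,
      show (u + 1 + 1) - 1 = u + 1 from by omega,
      show u + 1 + 1 = u + 2 from by omega,
      show 2 * (u + v + 4) - 2 * (u + 2) = 2 * (v + 2) from by omega,
      show (u + v + 4) - (u + 2) = v + 2 from by omega,
      show 2 * (v + 2) - 2 = 2 * (v + 1) from by omega,
      show (v + 2) - 1 = v + 1 from by omega]
  have h1 : u + 2 = u + 1 + 1 := rfl
  have h3 : v + 3 = v + 1 + 2 := by omega
  rw [h3]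
  omega
end

section
/- Let G be an abelian group, let n ≥ 1, let d_1, …, d_n be positive integers with g = d_1 + ⋯ + d_n, and partition the index set {1, …, 2g} into consecutive blocks B_1, …, B_n with |B_k| = 2d_k. Call a subset I ⊆ {1, …, 2g} a relation if |I ∩ B_k| = d_k for all k. Let x_1, …, x_{2g} ∈ G be such that the entries indexed by the last block B_n are pairwise distinct, and suppose ∑_{i=1}^{2g} x_i = 0. Then the number of relations I with ∑_{i ∈ I} x_i = 0 is at most (1/d_n) · ∏_{k=1}^{n} C(2d_k, d_k). -/
/-! Fix an index `ℓ` in the last block `B`. For a zero-sum relation `I`, exchanging `ℓ` with any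
of the `d_n` indices `j ∈ B` on the other side of `I` gives a relation `I ∆ {ℓ, j}` with sum
`±(x j - x ℓ)`, the sign being read off from whether `ℓ ∈ I ∆ {ℓ, j}`. Since `x` is injective on
`B`, the pair `(I, j)` is recovered from `I ∆ {ℓ, j}`; hence `d_n` times the number of zero-sum
relations is at most the number of all relations, which is at most `∏ C(2 d_k, d_k)`. -/

open Finset
open scoped symmDiff

namespace Finset

variable {α G : Type*} [DecidableEq α] [AddCommGroup G] {s : Finset α} {a b : α}

theorem symmDiff_pair_eq_insert_erase (ha : a ∉ s) (hb : b ∈ s) :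
    s ∆ {a, b} = insert a (s.erase b) := by
  ext i
  simp only [mem_symmDiff, mem_insert, mem_singleton, mem_erase]
  grind

theorem card_symmDiff_pair (ha : a ∉ s) (hb : b ∈ s) : #(s ∆ {a, b}) = #s := by
  rw [symmDiff_pair_eq_insert_erase ha hb,
    card_insert_of_notMem (fun h ↦ ha (mem_of_mem_erase h)), card_erase_add_one hb]

theorem card_symmDiff_pair_of_iff (h : b ∈ s ↔ a ∉ s) : #(s ∆ {a, b}) = #s := by
  by_cases ha : a ∈ s
  · rw [pair_comm]
    exact card_symmDiff_pair (by tauto) ha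
  · exact card_symmDiff_pair ha (h.2 ha)

theorem sum_symmDiff_pair (x : α → G) (ha : a ∉ s) (hb : b ∈ s) :
    ∑ i ∈ s ∆ {a, b}, x i = ∑ i ∈ s, x i + x a - x b := by
  rw [symmDiff_pair_eq_insert_erase ha hb, sum_insert (fun h ↦ ha (mem_of_mem_erase h)),
    sum_erase_eq_sub hb]
  abel

theorem apply_eq_of_symmDiff_pair_eq {s t : Finset α} {ℓ j j' : α} (x : α → G)
    (hst : ∑ i ∈ s, x i = ∑ i ∈ t, x i) (hj : j ∈ s ↔ ℓ ∉ s) (hj' : j' ∈ t ↔ ℓ ∉ t)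
    (h : s ∆ {ℓ, j} = t ∆ {ℓ, j'}) : x j = x j' := by
  have hℓ : ℓ ∈ s ↔ ℓ ∈ t := by
    simpa [mem_symmDiff, not_iff_not] using congrArg (ℓ ∈ ·) h
  have hsum := congrArg (∑ i ∈ ·, x i) h
  by_cases hs : ℓ ∈ s
  · have ht := hℓ.1 hs
    rw [pair_comm, sum_symmDiff_pair x (by tauto) hs, pair_comm,
      sum_symmDiff_pair x (by tauto) ht, hst] at hsum
    simpa using hsum
  · have ht : ℓ ∉ t := hℓ.not.1 hs
    rw [sum_symmDiff_pair x hs (hj.2 hs), sum_symmDiff_pair x ht (hj'.2 ht), hst] at hsum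
    simpa using hsum

theorem card_filter_mem_iff {B : Finset α} {m : ℕ} (hB : #B = 2 * m) (hs : #(s ∩ B) = m)
    (p : Prop) [Decidable p] : #{j ∈ B | j ∈ s ↔ p} = m := by
  by_cases hp : p
  · simp only [hp, iff_true, filter_mem_eq_inter, inter_comm B, hs]
  · simp only [hp, iff_false, filter_notMem_eq_sdiff, card_sdiff, hB, hs]
    omega

end Finset

theorem card_mul_le_card_of_symmDiff_pair_mem {α G : Type*} [DecidableEq α] [AddCommGroup G]
    {S T : Finset (Finset α)} {B : Finset α} {ℓ : α} {x : α → G} {c : ℕ}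
    (hx : Set.InjOn x B) (hS : ∀ I ∈ S, ∑ i ∈ I, x i = 0)
    (hc : ∀ I ∈ S, c ≤ #{j ∈ B | j ∈ I ↔ ℓ ∉ I})
    (hT : ∀ I ∈ S, ∀ j ∈ B, (j ∈ I ↔ ℓ ∉ I) → I ∆ {ℓ, j} ∈ T) :
    c * #S ≤ #T := by
  calc c * #S = ∑ I ∈ S, c := by rw [sum_const, smul_eq_mul, mul_comm]
    _ ≤ ∑ I ∈ S, #{j ∈ B | j ∈ I ↔ ℓ ∉ I} := sum_le_sum hc
    _ = #(S.sigma fun I ↦ {j ∈ B | j ∈ I ↔ ℓ ∉ I}) := (card_sigma _ _).symm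
    _ ≤ #T := by
      refine card_le_card_of_injOn (fun p ↦ p.1 ∆ {ℓ, p.2}) (fun p hp ↦ ?_) ?_
      · simp only [coe_sigma, Set.mem_sigma_iff, mem_coe, mem_filter] at hp
        exact hT p.1 hp.1 p.2 hp.2.1 hp.2.2
      · rintro ⟨I, j⟩ hp ⟨I', j'⟩ hp' h
        simp only [coe_sigma, Set.mem_sigma_iff, mem_coe, mem_filter] at hp hp' h
        have hjj' : j = j' := hx hp.2.1 hp'.2.1 <|
          apply_eq_of_symmDiff_pair_eq x ((hS I hp.1).trans (hS I' hp'.1).symm) hp.2.2 hp'.2.2 h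
        subst hjj'
        rw [symmDiff_left_injective _ h]

namespace Blocks

variable (d : ℕ → ℕ)

def blockStart (k : ℕ) : ℕ := 2 * ∑ j ∈ range k, d j

-- Blocks are indexed from `0`: `block d k` is the paper's `B_{k+1}`.
def block (k : ℕ) : Finset ℕ := Ico (blockStart d k) (blockStart d (k + 1))

def relations (n : ℕ) : Finset (Finset ℕ) :=
  {I ∈ (range (blockStart d n)).powerset | ∀ k < n, #(I ∩ block d k) = d k}

variable {d}

theorem blockStart_succ (k : ℕ) : blockStart d (k + 1) = blockStart d k + 2 * d k := by
  simp only [blockStart, sum_range_succ, mul_add]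

theorem blockStart_mono : Monotone (blockStart d) := fun _ _ h ↦
  Nat.mul_le_mul_left 2 (sum_le_sum_of_subset (range_subset_range.2 h))

theorem card_block (k : ℕ) : #(block d k) = 2 * d k := by
  rw [block, Nat.card_Ico, blockStart_succ]
  omega

theorem disjoint_block {k m : ℕ} (h : k ≠ m) : Disjoint (block d k) (block d m) := by
  wlog hkm : k < m generalizing k m
  · exact (this h.symm (by omega)).symm
  have := blockStart_mono (d := d) (Nat.succ_le_of_lt hkm)
  exact Ico_disjoint_Ico_consecutive _ _ _ |>.mono_right (Ico_subset_Ico_left this)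

theorem biUnion_range_block (n : ℕ) : (range n).biUnion (block d) = range (blockStart d n) := by
  induction n with
  | zero => simp [blockStart]
  | succ n ih =>
    rw [range_add_one, biUnion_insert, ih, union_comm, block, range_eq_Ico, range_eq_Ico,
      Ico_union_Ico_eq_Ico (Nat.zero_le _) (blockStart_mono n.le_succ)]

theorem block_subset_range {k n : ℕ} (hk : k < n) : block d k ⊆ range (blockStart d n) :=
  biUnion_range_block n ▸ subset_biUnion_of_mem (block d) (mem_range.2 hk)

theorem card_relations_le (n : ℕ) :
    #(relations d n) ≤ ∏ k ∈ range n, (2 * d k).choose (d k) := by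
  calc #(relations d n)
      ≤ #((range n).pi fun k ↦ (block d k).powersetCard (d k)) := by
        refine card_le_card_of_injOn (fun I k _ ↦ I ∩ block d k) (fun I hI ↦ ?_)
          (fun I hI J hJ h ↦ ?_)
        · simp only [relations, coe_filter, mem_powerset, Set.mem_ofPred_eq] at hI
          simp only [mem_coe, mem_pi, mem_powersetCard, mem_range]
          exact fun k hk ↦ ⟨inter_subset_right, hI.2 k hk⟩
        · simp only [relations, coe_filter, mem_powerset, Set.mem_ofPred_eq] at hI hJ
          rw [← inter_eq_left.2 hI.1, ← inter_eq_left.2 hJ.1, ← biUnion_range_block,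
            inter_biUnion, inter_biUnion]
          exact biUnion_congr rfl fun k hk ↦ congrFun (congrFun h k) hk
    _ = ∏ k ∈ range n, (2 * d k).choose (d k) := by
        simp only [card_pi, card_powersetCard, card_block]

theorem symmDiff_pair_mem_relations {n m : ℕ} (hm : m < n) {I : Finset ℕ}
    (hI : I ∈ relations d n) {a b : ℕ} (ha : a ∈ block d m) (hb : b ∈ block d m)
    (hab : b ∈ I ↔ a ∉ I) :
    I ∆ {a, b} ∈ relations d n := by
  simp only [relations, mem_filter, mem_powerset] at hI ⊢
  have hpair : {a, b} ⊆ block d m := insert_subset ha (singleton_subset_iff.2 hb)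
  refine ⟨symmDiff_le_sup.trans (union_subset hI.1 (hpair.trans (block_subset_range hm))),
    fun k hk ↦ ?_⟩
  rw [← hI.2 k hk, ← inf_eq_inter, inf_symmDiff_distrib_right, inf_eq_inter, inf_eq_inter]
  obtain rfl | hkm := eq_or_ne k m
  · rw [inter_eq_left.2 hpair]
    exact card_symmDiff_pair_of_iff (by simp only [mem_inter, ha, hb, and_true, hab])
  · rw [disjoint_iff_inter_eq_empty.1 ((disjoint_block hkm).symm.mono_left hpair),
      ← bot_eq_empty, symmDiff_bot]

theorem card_mul_card_filter_sum_eq_zero_le {G : Type*} [AddCommGroup G] [DecidableEq G]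
    {n m : ℕ} (hm : m < n) {x : ℕ → G} (hx : Set.InjOn x (block d m)) :
    d m * #{I ∈ relations d n | ∑ i ∈ I, x i = 0} ≤ #(relations d n) := by
  obtain hdm | hdm := Nat.eq_zero_or_pos (d m)
  · simp [hdm]
  obtain ⟨ℓ, hℓ⟩ : (block d m).Nonempty := by
    rw [← card_pos, card_block]
    omega
  refine card_mul_le_card_of_symmDiff_pair_mem hx (fun I hI ↦ (mem_filter.1 hI).2)
    (fun I hI ↦ ?_)
    (fun I hI j hj hjI ↦ symmDiff_pair_mem_relations hm (mem_filter.1 hI).1 hℓ hj hjI)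
  have hI := (mem_filter.1 (mem_filter.1 hI).1).2 m hm
  exact (card_filter_mem_iff (card_block m) hI _).ge

end Blocks

open Blocks in
theorem stmt_13_general {G : Type*} [AddCommGroup G] [DecidableEq G]
    (n : ℕ) (hn : 1 ≤ n) (d : ℕ → ℕ)
    (g : ℕ) (hg : g = ∑ k ∈ Finset.range n, d k)
    (x : ℕ → G)
    (hinj : ∀ i ∈ Finset.Ico (2 * ∑ k ∈ Finset.range (n - 1), d k) (2 * g),
            ∀ j ∈ Finset.Ico (2 * ∑ k ∈ Finset.range (n - 1), d k) (2 * g),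
              x i = x j → i = j) :
    d (n - 1) *
      ((Finset.range (2 * g)).powerset.filter (fun I =>
        (∀ k < n,
          (I ∩ Finset.Ico (2 * ∑ j ∈ Finset.range k, d j)
              (2 * ∑ j ∈ Finset.range (k + 1), d j)).card = d k) ∧
        ∑ i ∈ I, x i = 0)).card
      ≤ ∏ k ∈ Finset.range n, Nat.choose (2 * d k) (d k) := by
  subst hg
  have hlast : block d (n - 1) = Ico (blockStart d (n - 1)) (blockStart d n) := by
    rw [block, Nat.sub_add_cancel hn]
  calc _ = d (n - 1) * #{I ∈ relations d n | ∑ i ∈ I, x i = 0} := by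
        rw [relations, filter_filter]
        rfl
    _ ≤ #(relations d n) :=
        card_mul_card_filter_sum_eq_zero_le (by omega) (hlast ▸ fun i hi j hj ↦ hinj i hi j hj)
    _ ≤ _ := card_relations_le n

theorem stmt_13 {G : Type*} [AddCommGroup G] [DecidableEq G]
    (n : ℕ) (hn : 1 ≤ n) (d : ℕ → ℕ) (hd : ∀ k < n, 0 < d k)
    (g : ℕ) (hg : g = ∑ k ∈ Finset.range n, d k)
    (x : ℕ → G)
    (hsum : ∑ i ∈ Finset.range (2 * g), x i = 0)
    (hinj : ∀ i ∈ Finset.Ico (2 * ∑ k ∈ Finset.range (n - 1), d k) (2 * g),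
            ∀ j ∈ Finset.Ico (2 * ∑ k ∈ Finset.range (n - 1), d k) (2 * g),
              x i = x j → i = j) :
    d (n - 1) *
      ((Finset.range (2 * g)).powerset.filter (fun I =>
        (∀ k < n,
          (I ∩ Finset.Ico (2 * ∑ j ∈ Finset.range k, d j)
              (2 * ∑ j ∈ Finset.range (k + 1), d j)).card = d k) ∧
        ∑ i ∈ I, x i = 0)).card
      ≤ ∏ k ∈ Finset.range n, Nat.choose (2 * d k) (d k) :=
  stmt_13_general n hn d g hg x hinj
end
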